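/- Let A• be a bounded-above complex of finite-dimensional double (bi-graded) vector spaces with differential d = d₋₁ + d₀ + d₁ decomposed by an auxiliary 'exterior' grading (d_j raises exterior grade by j, all raise total degree by 1), such that the homology of d₋₁ is concentrated in a single exterior grade. Then for any d-closed total-degree-0 element ε₀ concentrated in exterior grade 0 whose d₀-image vanishes in d₋₁-homology, there exist elements ε₁, ε₂, … of exterior grades 1, 2, … (finitely many nonzero) such that ε = ε₀ + ε₁ + ⋯ satisfies dε = 0. The inductive step: if d₋₁ε_{k+1} = −d₀ε_k − d₁ε_{k−1} holds for grades ≤ k, then d₋₁(−d₀ε_k − d₁ε_{k−1}) = 0. -/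
import Mathlib


/-
STATEMENT 19 (perturbation lemma): Let V be a bounded-above bigraded family
of finite-dimensional ℂ-vector spaces, V n e (n = total degree ∈ ℤ,
e = exterior grade ∈ ℕ, with bounded exterior grading), with maps
d₋₁ : V n (e+1) → V (n+1) e,  d₀ : V n e → V (n+1) e,  d₁ : V n e → V (n+1) (e+1)
(the components of a total differential d = d₋₁ + d₀ + d₁ of total degree 1),
satisfying the componentwise relations of d² = 0, and such that the homology
of d₋₁ is concentrated in exterior grade 0 (acyclicity in grades ≥ 1).
Then for any total-degree-0 element ε₀ of exterior grade 0 whose d₀-image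
vanishes in d₋₁-homology, there exist ε₁, ε₂, … of exterior grades 1, 2, …
(finitely many nonzero) such that ε = ε₀ + ε₁ + ⋯ satisfies dε = 0,
i.e. componentwise d₋₁ε_{e+1} + d₀ε_e + d₁ε_{e−1} = 0 for all e.
-/
theorem stmt_19 (V : ℤ → ℕ → Type)
    [∀ n e, AddCommGroup (V n e)] [∀ n e, Module ℂ (V n e)]
    (hfd : ∀ n e, FiniteDimensional ℂ (V n e))
    (hbdd : ∃ n₀ : ℤ, ∀ n e, n₀ < n → ∀ x : V n e, x = 0)
    (hext : ∃ E : ℕ, ∀ n e, E < e → ∀ x : V n e, x = 0)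
    (dm : ∀ n e, V n (e + 1) →ₗ[ℂ] V (n + 1) e)
    (d0 : ∀ n e, V n e →ₗ[ℂ] V (n + 1) e)
    (d1 : ∀ n e, V n e →ₗ[ℂ] V (n + 1) (e + 1))
    -- the components of d² = 0:
    (hmm : ∀ n e (x : V n (e + 2)), dm (n + 1) e (dm n (e + 1) x) = 0)
    (hm0 : ∀ n e (x : V n (e + 1)),
      dm (n + 1) e (d0 n (e + 1) x) + d0 (n + 1) e (dm n e x) = 0)
    (h00 : ∀ n (x : V n 0),
      d0 (n + 1) 0 (d0 n 0 x) + dm (n + 1) 0 (d1 n 0 x) = 0)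
    (h00' : ∀ n e (x : V n (e + 1)),
      d0 (n + 1) (e + 1) (d0 n (e + 1) x) + dm (n + 1) (e + 1) (d1 n (e + 1) x)
        + d1 (n + 1) e (dm n e x) = 0)
    (h01 : ∀ n e (x : V n e),
      d0 (n + 1) (e + 1) (d1 n e x) + d1 (n + 1) e (d0 n e x) = 0)
    (h11 : ∀ n e (x : V n e), d1 (n + 1) (e + 1) (d1 n e x) = 0)
    -- homology of d₋₁ is concentrated in exterior grade 0:
    (hacyc : ∀ n e (x : V (n + 1) (e + 1)), dm (n + 1) e x = 0 →
      ∃ y : V n (e + 2), dm n (e + 1) y = x)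
    -- ε₀, whose d₀-image vanishes in d₋₁-homology:
    (ε₀ : V 0 0)
    (hε₀ : ∃ w : V 0 1, dm 0 0 w = d0 0 0 ε₀) :
    ∃ ε : (e : ℕ) → V 0 e,
      ε 0 = ε₀ ∧ {e | ε e ≠ 0}.Finite ∧
      dm 0 0 (ε 1) + d0 0 0 (ε 0) = 0 ∧
      ∀ e, dm 0 (e + 1) (ε (e + 2)) + d0 0 (e + 1) (ε (e + 1)) + d1 0 e (ε e) = 0 := by

  classical
  obtain ⟨E, hE⟩ := hext
  obtain ⟨w, hw⟩ := hε₀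
  have key : ∀ m : ℕ, ∃ g : ∀ e, V 0 e, g 0 = ε₀ ∧
      dm 0 0 (g 1) + d0 0 0 (g 0) = 0 ∧
      ∀ f, f < m → dm 0 (f+1) (g (f+2)) + d0 0 (f+1) (g (f+1)) + d1 0 f (g f) = 0 := by
    intro m
    induction m with
    | zero =>
      refine ⟨fun e => match e with | 0 => ε₀ | 1 => -w | (_+2) => 0, rfl, ?_, ?_⟩
      · show dm 0 0 (-w) + d0 0 0 ε₀ = 0
        rw [map_neg, hw]
        exact neg_add_cancel _
      · intro f hf; exact absurd hf (Nat.not_lt_zero f)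
    | succ m ih =>
      obtain ⟨g, hg0, hg1, hgrel⟩ := ih
      -- closedness of -(d0 (g (m+1)) + d1 (g m))
      have hclosed : dm 1 m (-(d0 0 (m+1) (g (m+1)) + d1 0 m (g m))) = 0 := by
        rw [map_neg, neg_eq_zero, map_add]
        match m, hg1, hgrel with
        | 0, hg1, hgrel =>
          have e1 : dm 1 0 (d0 0 1 (g 1)) + d0 1 0 (dm 0 0 (g 1)) = 0 := hm0 0 0 (g 1)
          have e2 : d0 1 0 (d0 0 0 (g 0)) + dm 1 0 (d1 0 0 (g 0)) = 0 := h00 0 (g 0)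
          have e3 : d0 1 0 (dm 0 0 (g 1)) + d0 1 0 (d0 0 0 (g 0)) = 0 := by
            rw [← map_add, hg1, map_zero]
          calc dm 1 0 (d0 0 1 (g 1)) + dm 1 0 (d1 0 0 (g 0))
              = (dm 1 0 (d0 0 1 (g 1)) + d0 1 0 (dm 0 0 (g 1)))
                + (d0 1 0 (d0 0 0 (g 0)) + dm 1 0 (d1 0 0 (g 0)))
                - (d0 1 0 (dm 0 0 (g 1)) + d0 1 0 (d0 0 0 (g 0))) := by abel
            _ = 0 := by rw [e1, e2, e3]; abel
        | (k+1), hg1, hgrel =>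
          have e1 : dm 1 (k+1) (d0 0 (k+1+1) (g (k+2)))
              + d0 1 (k+1) (dm 0 (k+1) (g (k+2))) = 0 := hm0 0 (k+1) (g (k+2))
          have e2 : d0 1 (k+1) (d0 0 (k+1) (g (k+1))) + dm 1 (k+1) (d1 0 (k+1) (g (k+1)))
              + d1 1 k (dm 0 k (g (k+1))) = 0 := h00' 0 k (g (k+1))
          have e3 := hgrel k (by omega)
          have e6 : d0 1 (k+1) (dm 0 (k+1) (g (k+2))) + d0 1 (k+1) (d0 0 (k+1) (g (k+1)))
              + d0 1 (k+1) (d1 0 k (g k)) = 0 := by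
            rw [← map_add, ← map_add, e3, map_zero]
          have e4 : d1 1 k (dm 0 k (g (k+1))) + d1 1 k (d0 0 k (g k)) = 0 := by
            match k, hg1, hgrel with
            | 0, hg1, hgrel =>
              rw [← map_add, hg1, map_zero]
            | (j+1), hg1, hgrel =>
              have e3' := hgrel j (by omega)
              have e7 : d1 1 (j+1) (dm 0 (j+1) (g (j+2))) + d1 1 (j+1) (d0 0 (j+1) (g (j+1)))
                  + d1 1 (j+1) (d1 0 j (g j)) = 0 := by
                rw [← map_add, ← map_add, e3', map_zero]
              calc d1 1 (j+1) (dm 0 (j+1) (g (j+2))) + d1 1 (j+1) (d0 0 (j+1) (g (j+1)))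
                  = (d1 1 (j+1) (dm 0 (j+1) (g (j+2))) + d1 1 (j+1) (d0 0 (j+1) (g (j+1)))
                    + d1 1 (j+1) (d1 0 j (g j))) - d1 1 (j+1) (d1 0 j (g j)) := by abel
                _ = 0 := by
                  have e8 : d1 1 (j+1) (d1 0 j (g j)) = 0 := h11 0 j (g j)
                  rw [e7, e8]; abel
          have e5 : d0 1 (k+1) (d1 0 k (g k)) + d1 1 k (d0 0 k (g k)) = 0 := h01 0 k (g k)
          calc dm 1 (k+1) (d0 0 (k+1+1) (g (k+2))) + dm 1 (k+1) (d1 0 (k+1) (g (k+1)))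
              = (dm 1 (k+1) (d0 0 (k+1+1) (g (k+2))) + d0 1 (k+1) (dm 0 (k+1) (g (k+2))))
                + (d0 1 (k+1) (d0 0 (k+1) (g (k+1))) + dm 1 (k+1) (d1 0 (k+1) (g (k+1)))
                  + d1 1 k (dm 0 k (g (k+1))))
                - (d0 1 (k+1) (dm 0 (k+1) (g (k+2))) + d0 1 (k+1) (d0 0 (k+1) (g (k+1)))
                  + d0 1 (k+1) (d1 0 k (g k)))
                - (d1 1 k (dm 0 k (g (k+1))) + d1 1 k (d0 0 k (g k)))
                + (d0 1 (k+1) (d1 0 k (g k)) + d1 1 k (d0 0 k (g k))) := by abel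
            _ = 0 := by rw [e1, e2, e6, e4, e5]; abel
      obtain ⟨c, hc⟩ := hacyc 0 m (-(d0 0 (m+1) (g (m+1)) + d1 0 m (g m))) hclosed
      refine ⟨Function.update g (m+2) c, ?_, ?_, ?_⟩
      · rw [Function.update_of_ne (show (0:ℕ) ≠ m+2 by omega), hg0]
      · rw [Function.update_of_ne (show (1:ℕ) ≠ m+2 by omega),
          Function.update_of_ne (show (0:ℕ) ≠ m+2 by omega)]
        exact hg1
      · intro f hf
        rcases Nat.lt_succ_iff_lt_or_eq.mp hf with hf' | rfl
        · rw [Function.update_of_ne (show f+2 ≠ m+2 by omega),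
            Function.update_of_ne (show f+1 ≠ m+2 by omega),
            Function.update_of_ne (show f ≠ m+2 by omega)]
          exact hgrel f hf'
        · rw [Function.update_self,
            Function.update_of_ne (show f+1 ≠ f+2 by omega),
            Function.update_of_ne (show f ≠ f+2 by omega), hc]
          abel
  obtain ⟨g, hg0, hg1, hgrel⟩ := key (E+1)
  refine ⟨g, hg0, ?_, hg1, ?_⟩
  · apply Set.Finite.subset (Set.finite_Iic E)
    intro e he
    by_contra h
    exact he (hE 0 e (by simpa using h) (g e))
  · intro f
    by_cases hf : f < E + 1
    · exact hgrel f hf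
    · exact hE 1 (f+1) (by omega) _
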